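/- arXiv:1512.03868 — 3 statements merged into one kernel-verified Lean document; each statement's English description precedes it below -/
import Mathlib

section
/- Let A and B be algebraic information systems and let f be an approximable mapping between A and B. Define |f| : |A| → |B| by |f|(x) = {d ∈ D_B | there is a finite u ⊆ x with u f {d}}. Then |f| is correctly defined (for every x ∈ |A|, |f|(x) is an element of |B|) and Scott continuous: |f| is monotone with respect to inclusion, and for every directed family S ⊆ |A|, |f|(⋃S) = ⋃_{s∈S} |f|(s). -/
/-- An algebraic information system: a set of tokens `D`, a false statement `nabla`,
and an entailment relation between finite subsets of `D`. -/
structure AlgInfoSys (D : Type*) where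
  nabla : D
  entails : Set D → Set D → Prop
  entails_finite : ∀ u v : Set D, entails u v → u.Finite ∧ v.Finite
  nondegen : ¬ entails ∅ {nabla}
  refl : ∀ u v : Set D, u.Finite → v ⊆ u → entails u v
  trans : ∀ (u w : Set D) (V : Set (Set D)), V.Finite →
    (∀ v ∈ V, entails u v) → entails (⋃₀ V) w → entails u w
  contra : ∀ u : Set D, u.Finite → entails {nabla} u

/-- A theory (element of the associated domain `|A|`): a consistent, deductively
closed set of tokens. -/
def AlgInfoSys.IsElement {D : Type*} (A : AlgInfoSys D) (x : Set D) : Prop :=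
  A.nabla ∉ x ∧ ∀ u v : Set D, u ⊆ x → A.entails u v → v ⊆ x

/-- The deductive closure of a set of tokens. -/
def AlgInfoSys.closure {D : Type*} (A : AlgInfoSys D) (x : Set D) : Set D :=
  {d | ∃ u : Set D, u ⊆ x ∧ A.entails u {d}}

/-- An approximable mapping (input-output inference relation) between two
algebraic information systems. -/
structure ApproxMapping {D₁ D₂ : Type*} (A : AlgInfoSys D₁) (B : AlgInfoSys D₂) where
  rel : Set D₁ → Set D₂ → Prop
  rel_finite : ∀ u v, rel u v → u.Finite ∧ v.Finite
  nontriv : rel ∅ ∅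
  consistent : ∀ u : Set D₁, u.Finite → ¬ A.entails u {A.nabla} → ¬ rel u {B.nabla}
  inconsistent : rel {A.nabla} {B.nabla}
  accum : ∀ (u : Set D₁) (V : Set (Set D₂)), V.Finite → V.Nonempty →
    (∀ v ∈ V, rel u v) → rel u (⋃₀ V)
  trans : ∀ (u' u : Set D₁) (v v' : Set D₂),
    A.entails u' u → rel u v → B.entails v v' → rel u' v'

/-- The function on domains associated with an approximable mapping. -/
def ApproxMapping.app {D₁ D₂ : Type*} {A : AlgInfoSys D₁} {B : AlgInfoSys D₂}
    (f : ApproxMapping A B) (x : Set D₁) : Set D₂ :=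
  {d | ∃ u : Set D₁, u ⊆ x ∧ f.rel u {d}}

/-! A finite part of `|f|(x)` is produced by a single finite `u ⊆ x`: join the witnesses of its
tokens, weaken each to the join, and accumulate. Deductive closure of `|f|(x)` follows by
pushing that `u` through the entailment. Continuity holds because `f` relates finite sets only,
and a finite subset of a directed union already lies in one member. -/

namespace AlgInfoSys

variable {D : Type*} (A : AlgInfoSys D)

theorem entails_self {u : Set D} (hu : u.Finite) : A.entails u u :=
  A.refl u u hu subset_rfl

theorem entails_singleton_of_mem {u v : Set D} (h : A.entails u v) {e : D} (he : e ∈ v) :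
    A.entails u {e} := by
  refine A.trans u {e} {v} (Set.finite_singleton v) (by simpa) ?_
  rw [Set.sUnion_singleton]
  exact A.refl v {e} (A.entails_finite _ _ h).2 (Set.singleton_subset_iff.2 he)

end AlgInfoSys

namespace ApproxMapping

variable {D₁ D₂ : Type*} {A : AlgInfoSys D₁} {B : AlgInfoSys D₂} (f : ApproxMapping A B)

theorem rel_of_subset_left {u u' : Set D₁} {v : Set D₂} (hu' : u'.Finite) (huu' : u ⊆ u')
    (h : f.rel u v) : f.rel u' v :=
  f.trans u' u v v (A.refl u' u hu' huu') h (B.entails_self (f.rel_finite u v h).2)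

theorem rel_of_entails_right {u : Set D₁} {v w : Set D₂} (h : f.rel u v) (hvw : B.entails v w) :
    f.rel u w :=
  f.trans u u v w (A.entails_self (f.rel_finite u v h).1) h hvw

theorem rel_union {u : Set D₁} {v₁ v₂ : Set D₂} (h₁ : f.rel u v₁) (h₂ : f.rel u v₂) :
    f.rel u (v₁ ∪ v₂) := by
  rw [← Set.sUnion_pair]
  exact f.accum u {v₁, v₂} (Set.toFinite _) (Set.insert_nonempty _ _) (by simp [h₁, h₂])

theorem exists_rel_of_subset_app {x : Set D₁} {v : Set D₂} (hv : v.Finite)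
    (hvx : v ⊆ f.app x) : ∃ u ⊆ x, f.rel u v := by
  induction v, hv using Set.Finite.induction_on with
  | empty => exact ⟨∅, Set.empty_subset x, f.nontriv⟩
  | @insert d v _ _ ih =>
    obtain ⟨u₁, hu₁x, hu₁⟩ := hvx (Set.mem_insert d v)
    obtain ⟨u₂, hu₂x, hu₂⟩ := ih ((Set.subset_insert d v).trans hvx)
    have hfin : (u₁ ∪ u₂).Finite := (f.rel_finite _ _ hu₁).1.union (f.rel_finite _ _ hu₂).1
    refine ⟨u₁ ∪ u₂, Set.union_subset hu₁x hu₂x, ?_⟩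
    rw [Set.insert_eq]
    exact f.rel_union (f.rel_of_subset_left hfin Set.subset_union_left hu₁)
      (f.rel_of_subset_left hfin Set.subset_union_right hu₂)

theorem isElement_app {x : Set D₁} (hx : A.IsElement x) : B.IsElement (f.app x) := by
  refine ⟨?_, ?_⟩
  · rintro ⟨u, hux, hu⟩
    have hu_consistent : ¬ A.entails u {A.nabla} := fun h => hx.1 (hx.2 u _ hux h rfl)
    exact f.consistent u (f.rel_finite _ _ hu).1 hu_consistent hu
  · intro v w hv hvw e he
    obtain ⟨u, hux, hu⟩ := f.exists_rel_of_subset_app (B.entails_finite _ _ hvw).1 hv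
    exact ⟨u, hux, f.rel_of_entails_right hu (B.entails_singleton_of_mem hvw he)⟩

theorem app_mono : Monotone f.app :=
  fun _ _ hxy _ ⟨u, hux, hu⟩ => ⟨u, hux.trans hxy, hu⟩

theorem app_sUnion_of_directedOn {S : Set (Set D₁)} (hS : S.Nonempty)
    (hdir : DirectedOn (· ⊆ ·) S) : f.app (⋃₀ S) = ⋃ s ∈ S, f.app s := by
  refine subset_antisymm ?_
    (Set.iUnion₂_subset fun s hs => f.app_mono (Set.subset_sUnion_of_mem hs))
  rintro d ⟨u, huS, hu⟩
  obtain ⟨s, hs, hus⟩ :=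
    hdir.exists_mem_subset_of_finite_of_subset_sUnion hS (f.rel_finite _ _ hu).1 huS
  exact Set.mem_biUnion hs ⟨u, hus, hu⟩

end ApproxMapping

/-- the function `|f|` associated with an approximable mapping `f`
is correctly defined (maps elements to elements) and Scott continuous:
monotone and preserving unions of nonempty directed families of elements. -/
theorem stmt4 {D₁ D₂ : Type*} (A : AlgInfoSys D₁) (B : AlgInfoSys D₂)
    (f : ApproxMapping A B) :
    (∀ x : Set D₁, A.IsElement x → B.IsElement (f.app x)) ∧
    (∀ x y : Set D₁, A.IsElement x → A.IsElement y → x ⊆ y → f.app x ⊆ f.app y) ∧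
    (∀ S : Set (Set D₁), S.Nonempty → (∀ s ∈ S, A.IsElement s) →
      DirectedOn (· ⊆ ·) S → f.app (⋃₀ S) = ⋃ s ∈ S, f.app s) :=
  ⟨fun _ => f.isElement_app, fun _ _ _ _ hxy => f.app_mono hxy,
    fun _ hS _ hdir => f.app_sUnion_of_directedOn hS hdir⟩
end

section
/- Let A be an algebraic Scott domain and let r : A → A be a Scott continuous retraction (r ∘ r = r). Then the set Fix(r) = {x ∈ A | r(x) = x}, with the order induced from A, is an algebraic dcpo (i.e., r is finitary) if and only if for all compact elements x₀, z₀ of A with z₀ ⊑ r(x₀) there exists a compact element y₀ of A such that y₀ ⊑ r(x₀), y₀ ⊑ r(y₀), and z₀ ⊑ r(y₀). -/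
/-- `x` is way below `y`: for every nonempty directed set `S` possessing a least
upper bound `b` with `y ≤ b`, there is `s ∈ S` with `x ≤ s`. -/
def wayBelow {α : Type*} [Preorder α] (x y : α) : Prop :=
  ∀ S : Set α, S.Nonempty → DirectedOn (· ≤ ·) S → ∀ b : α, IsLUB S b → y ≤ b → ∃ s ∈ S, x ≤ s

/-- A directed complete partial order: every directed subset (including `∅`,
so there is a least element) has a least upper bound. -/
def IsDcpo (α : Type*) [Preorder α] : Prop :=
  ∀ S : Set α, DirectedOn (· ≤ ·) S → ∃ b, IsLUB S b

/-- Bounded completeness: every subset with an upper bound has a least upper bound. -/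
def BoundedComplete (α : Type*) [Preorder α] : Prop :=
  ∀ S : Set α, (∃ b, ∀ s ∈ S, s ≤ b) → ∃ m, IsLUB S m

/-- Algebraicity: for every element `a`, the set of compact elements below `a` is
(nonempty and) directed with least upper bound `a`. -/
def IsAlgebraicDom (α : Type*) [Preorder α] : Prop :=
  ∀ a : α, ({k : α | wayBelow k k ∧ k ≤ a}).Nonempty ∧
    DirectedOn (· ≤ ·) {k : α | wayBelow k k ∧ k ≤ a} ∧
    IsLUB {k : α | wayBelow k k ∧ k ≤ a} a

/-- `K` is a basis of a continuous dcpo: for every `a`, the set of elements of `K`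
way below `a` is (nonempty and) directed with least upper bound `a`. -/
def IsDomBasis {α : Type*} [Preorder α] (K : Set α) : Prop :=
  ∀ a : α, ({k ∈ K | wayBelow k a}).Nonempty ∧
    DirectedOn (· ≤ ·) {k ∈ K | wayBelow k a} ∧
    IsLUB {k ∈ K | wayBelow k a} a

/-- Scott open sets: upper sets inaccessible by least upper bounds of nonempty
directed sets. -/
def ScottOpen {α : Type*} [Preorder α] (U : Set α) : Prop :=
  (∀ x ∈ U, ∀ y, x ≤ y → y ∈ U) ∧
  ∀ S : Set α, S.Nonempty → DirectedOn (· ≤ ·) S → ∀ b : α, IsLUB S b → b ∈ U → ∃ s ∈ S, s ∈ U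

/-- Interior in the Scott topology: the largest Scott open subset. -/
def scottInt {α : Type*} [Preorder α] (B : Set α) : Set α :=
  ⋃₀ {U : Set α | ScottOpen U ∧ U ⊆ B}

/-- Negative information about `x`: the elements inconsistent with `x`
(the pair has no upper bound). -/
def negSet {α : Type*} [Preorder α] (x : α) : Set α :=
  {y | ¬∃ b, x ≤ b ∧ y ≤ b}

/-- `J_x = {y | x ∈ Int (I_y)}`, the continuous approximation of `I_x = negSet x`. -/
def jSet {α : Type*} [Preorder α] (x : α) : Set α :=
  {y | x ∈ scottInt (negSet y)}

/-- The set of total (maximal) elements. -/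
def TotalElems (α : Type*) [Preorder α] : Set α := {x | ∀ y, x ≤ y → y = x}

/-! Suprema of directed sets of fixed points, computed in `α`, are again fixed, so `Fix(r)` is a
sub-dcpo of `α`, and every fixed point `a` is the directed supremum of the fixed points `r z`, `z`
compact below `a`. Hence `r y` is compact in `Fix(r)` whenever `y` is compact with `y ⊑ r y`, and
conversely every compact fixed point `k` is `r y` for some compact `y ⊑ k`. The condition on `x₀, z₀`
puts each such `r z` below a compact fixed point `r y ⊑ a`, which makes `Fix(r)` algebraic at `a`.
Conversely, if `Fix(r)` is algebraic, a compact `z₀ ⊑ r x₀` lies below a compact fixed point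
`k ⊑ r x₀`, and any compact `y₀ ⊑ k` with `r y₀ = k` does the job. -/

section Algebraic

variable {β : Type*} [Preorder β]

def compactsBelow (a : β) : Set β := {k | wayBelow k k ∧ k ≤ a}

def IsAlgebraicAt (a : β) : Prop :=
  (compactsBelow a).Nonempty ∧ DirectedOn (· ≤ ·) (compactsBelow a) ∧ IsLUB (compactsBelow a) a

theorem IsAlgebraicAt.of_cofinal {a : β} {D : Set β} (hne : D.Nonempty)
    (hdir : DirectedOn (· ≤ ·) D) (hlub : IsLUB D a)
    (hcof : ∀ d ∈ D, ∃ k ∈ compactsBelow a, d ≤ k) : IsAlgebraicAt a := by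
  refine ⟨?_, ?_, ?_⟩
  · obtain ⟨d, hd⟩ := hne
    obtain ⟨k, hk, -⟩ := hcof d hd
    exact ⟨k, hk⟩
  · rintro c ⟨hc, hca⟩ c' ⟨hc', hc'a⟩
    obtain ⟨d, hd, hcd⟩ := hc D hne hdir a hlub hca
    obtain ⟨d', hd', hcd'⟩ := hc' D hne hdir a hlub hc'a
    obtain ⟨e, he, hde, hd'e⟩ := hdir d hd d' hd'
    obtain ⟨k, hk, hek⟩ := hcof e he
    exact ⟨k, hk, hcd.trans (hde.trans hek), hcd'.trans (hd'e.trans hek)⟩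
  · refine ⟨fun k hk => hk.2, fun u hu => hlub.2 fun d hd => ?_⟩
    obtain ⟨k, hk, hdk⟩ := hcof d hd
    exact hdk.trans (hu hk)

theorem ScottContinuous.exists_mem_compactsBelow_of_le_apply {γ : Type*} [Preorder γ]
    {f : β → γ} (hf : ScottContinuous f) {x : β} (hx : IsAlgebraicAt x) {z : γ}
    (hz : wayBelow z z) (hzx : z ≤ f x) : ∃ x₀ ∈ compactsBelow x, z ≤ f x₀ := by
  obtain ⟨hne, hdir, hlub⟩ := hx
  obtain ⟨_, ⟨x₀, hx₀, rfl⟩, hzx₀⟩ :=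
    hz _ (hne.image f) (hdir.mono_comp hf.monotone) _ (hf hne hdir hlub) hzx
  exact ⟨x₀, hx₀, hzx₀⟩

end Algebraic

section Retraction

variable {α : Type*} [PartialOrder α] {r : α → α}

def toFixed (hrr : r ∘ r = r) (x : α) : {x : α // r x = x} := ⟨r x, congrFun hrr x⟩

theorem toFixed_mono (hr : Monotone r) (hrr : r ∘ r = r) : Monotone (toFixed hrr) :=
  fun _ _ h => hr h

theorem exists_fixed_isLUB_image_val (hd : IsDcpo α) (hr : ScottContinuous r)
    {S : Set {x : α // r x = x}} (hne : S.Nonempty) (hdir : DirectedOn (· ≤ ·) S) :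
    ∃ c : {x : α // r x = x}, IsLUB (Subtype.val '' S) c.val := by
  have hdir' : DirectedOn (· ≤ ·) (Subtype.val '' S) := hdir.mono_comp fun _ _ h => h
  obtain ⟨c, hc⟩ := hd _ hdir'
  have hS : Set.EqOn r id (Subtype.val '' S) := by
    rintro _ ⟨y, -, rfl⟩
    exact y.2
  have hrc := hr (hne.image _) hdir' hc
  rw [hS.image_eq_self] at hrc
  exact ⟨⟨c, hrc.unique hc⟩, hc⟩

theorem isLUB_image_val_of_isLUB (hd : IsDcpo α) (hr : ScottContinuous r)
    {S : Set {x : α // r x = x}} (hne : S.Nonempty) (hdir : DirectedOn (· ≤ ·) S)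
    {b : {x : α // r x = x}} (hb : IsLUB S b) : IsLUB (Subtype.val '' S) b.val := by
  obtain ⟨c, hc⟩ := exists_fixed_isLUB_image_val hd hr hne hdir
  rwa [hb.unique (IsLUB.of_image Subtype.coe_le_coe hc)]

theorem isDcpo_fixed (hd : IsDcpo α) (hr : ScottContinuous r) (hrr : r ∘ r = r) :
    IsDcpo {x : α // r x = x} := by
  intro S hdir
  rcases S.eq_empty_or_nonempty with rfl | hne
  · obtain ⟨bot, hbot⟩ := hd ∅ (fun _ h => h.elim)
    exact ⟨toFixed hrr bot, isLUB_empty_iff.2 fun x =>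
      (hr.monotone (isLUB_empty_iff.1 hbot x.val)).trans_eq x.2⟩
  · obtain ⟨c, hc⟩ := exists_fixed_isLUB_image_val hd hr hne hdir
    exact ⟨c, IsLUB.of_image Subtype.coe_le_coe hc⟩

theorem isLUB_toFixed_image_compactsBelow (ha : IsAlgebraicDom α) (hr : ScottContinuous r)
    (hrr : r ∘ r = r) (a : {x : α // r x = x}) :
    IsLUB (toFixed hrr '' compactsBelow a.val) a := by
  obtain ⟨hne, hdir, hlub⟩ := ha a.val
  refine IsLUB.of_image Subtype.coe_le_coe ?_
  have hra := hr hne hdir hlub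
  rw [a.2] at hra
  rwa [Set.image_image]

theorem exists_mem_compactsBelow_apply_eq (ha : IsAlgebraicDom α) (hr : ScottContinuous r)
    (hrr : r ∘ r = r) {k : {x : α // r x = x}} (hk : wayBelow k k) :
    ∃ y ∈ compactsBelow k.val, r y = k.val := by
  obtain ⟨hne, hdir, -⟩ := ha k.val
  obtain ⟨_, ⟨y, hy, rfl⟩, hky⟩ := hk _ (hne.image _)
    (hdir.mono_comp (toFixed_mono hr.monotone hrr)) k
    (isLUB_toFixed_image_compactsBelow ha hr hrr k) le_rfl
  exact ⟨y, hy, le_antisymm ((hr.monotone hy.2).trans_eq k.2) hky⟩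

theorem wayBelow_self_toFixed (hd : IsDcpo α) (hr : ScottContinuous r) (hrr : r ∘ r = r)
    {y : α} (hy : wayBelow y y) (hyr : y ≤ r y) :
    wayBelow (toFixed hrr y) (toFixed hrr y) := by
  intro S hne hdir b hb hyb
  obtain ⟨_, ⟨t, ht, rfl⟩, hyt⟩ := hy _ (hne.image _) (hdir.mono_comp fun _ _ h => h) b.val
    (isLUB_image_val_of_isLUB hd hr hne hdir hb) (hyr.trans hyb)
  exact ⟨t, ht, (hr.monotone hyt).trans_eq t.2⟩

theorem exists_compact_of_isAlgebraicDom_fixed (hd : IsDcpo α) (ha : IsAlgebraicDom α)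
    (hr : ScottContinuous r) (hrr : r ∘ r = r) (hF : IsAlgebraicDom {x : α // r x = x})
    {x₀ z₀ : α} (hz₀ : wayBelow z₀ z₀) (hzx : z₀ ≤ r x₀) :
    ∃ y₀ : α, wayBelow y₀ y₀ ∧ y₀ ≤ r x₀ ∧ y₀ ≤ r y₀ ∧ z₀ ≤ r y₀ := by
  obtain ⟨hne, hdir, hlub⟩ := hF (toFixed hrr x₀)
  obtain ⟨_, ⟨k, ⟨hk, hkx⟩, rfl⟩, hzk⟩ := hz₀ _ (hne.image _) (hdir.mono_comp fun _ _ h => h) _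
    (isLUB_image_val_of_isLUB hd hr hne hdir hlub) hzx
  obtain ⟨y, ⟨hy, hyk⟩, hry⟩ := exists_mem_compactsBelow_apply_eq ha hr hrr hk
  exact ⟨y, hy, hyk.trans hkx, hyk.trans_eq hry.symm, hzk.trans_eq hry.symm⟩

theorem isAlgebraicDom_fixed_of_exists_compact (hd : IsDcpo α) (ha : IsAlgebraicDom α)
    (hr : ScottContinuous r) (hrr : r ∘ r = r)
    (h : ∀ x₀ z₀ : α, wayBelow x₀ x₀ → wayBelow z₀ z₀ → z₀ ≤ r x₀ →
      ∃ y₀ : α, wayBelow y₀ y₀ ∧ y₀ ≤ r x₀ ∧ y₀ ≤ r y₀ ∧ z₀ ≤ r y₀) :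
    IsAlgebraicDom {x : α // r x = x} := by
  intro a
  obtain ⟨hne, hdir, -⟩ := ha a.val
  refine IsAlgebraicAt.of_cofinal (hne.image _) (hdir.mono_comp (toFixed_mono hr.monotone hrr))
    (isLUB_toFixed_image_compactsBelow ha hr hrr a) ?_
  rintro _ ⟨z, ⟨hz, hza⟩, rfl⟩
  obtain ⟨x₀, ⟨hx₀, hx₀a⟩, hzx₀⟩ :=
    hr.exists_mem_compactsBelow_of_le_apply (ha a.val) hz (hza.trans_eq a.2.symm)
  obtain ⟨y, hy, hyx₀, hyr, hzy⟩ := h x₀ z hx₀ hz hzx₀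
  have hry : r (r y) = r y := congrFun hrr y
  refine ⟨toFixed hrr y, ⟨wayBelow_self_toFixed hd hr hrr hy hyr, ?_⟩, ?_⟩
  · calc r y ≤ r (r x₀) := hr.monotone hyx₀
      _ = r x₀ := congrFun hrr x₀
      _ ≤ r a.val := hr.monotone hx₀a
      _ = a.val := a.2
  · exact (hr.monotone hzy).trans_eq hry

end Retraction

theorem stmt6_general {α : Type*} [PartialOrder α]
    (hd : IsDcpo α) (ha : IsAlgebraicDom α)
    (r : α → α) (hcont : ScottContinuous r) (hidem : r ∘ r = r) :
    (IsDcpo {x : α // r x = x} ∧ IsAlgebraicDom {x : α // r x = x}) ↔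
    (∀ x₀ z₀ : α, wayBelow x₀ x₀ → wayBelow z₀ z₀ → z₀ ≤ r x₀ →
      ∃ y₀ : α, wayBelow y₀ y₀ ∧ y₀ ≤ r x₀ ∧ y₀ ≤ r y₀ ∧ z₀ ≤ r y₀) :=
  ⟨fun hF _ _ _ hz₀ hzx => exists_compact_of_isAlgebraicDom_fixed hd ha hcont hidem hF.2 hz₀ hzx,
    fun h => ⟨isDcpo_fixed hd hcont hidem,
      isAlgebraicDom_fixed_of_exists_compact hd ha hcont hidem h⟩⟩

/-- a Scott continuous retraction `r` of an algebraic Scott domain is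
finitary (its set of fixed points, with the induced order, is an algebraic dcpo)
iff for all compact `x₀, z₀` with `z₀ ≤ r x₀` there is a compact `y₀` with
`y₀ ≤ r x₀`, `y₀ ≤ r y₀` and `z₀ ≤ r y₀`. -/
theorem stmt6 {α : Type*} [PartialOrder α]
    (hd : IsDcpo α) (hb : BoundedComplete α) (ha : IsAlgebraicDom α)
    (r : α → α) (hcont : ScottContinuous r) (hidem : r ∘ r = r) :
    (IsDcpo {x : α // r x = x} ∧ IsAlgebraicDom {x : α // r x = x}) ↔
    (∀ x₀ z₀ : α, wayBelow x₀ x₀ → wayBelow z₀ z₀ → z₀ ≤ r x₀ →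
      ∃ y₀ : α, wayBelow y₀ y₀ ∧ y₀ ≤ r x₀ ∧ y₀ ≤ r y₀ ∧ z₀ ≤ r y₀) :=
  stmt6_general hd ha r hcont hidem
end

section
/- For every continuous dcpo A with a countable basis, there exists a CC-valuation μ on the system of Scott open sets of A: a function μ from the Scott open sets of A to [0, ∞] that is a normalized valuation (μ(∅)=0, μ(A)=1, monotone, and μ(U)+μ(V)=μ(U∩V)+μ(U∪V)), continuous (for every directed system of open sets {U_i}, μ(⋃_i U_i) = sup_i μ(U_i)), strongly non-degenerate (U ⊊ V open implies μ(U) < μ(V)), and co-continuous (for every filtered system of open sets {U_i}, μ(Int(⋂_i U_i)) = inf_i μ(U_i)). -/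
/-!
For each pair `a ≪ b` of basis elements, interpolation yields a chain `c` from `c 0 = b` down to
`c 1 = a`, indexed by the dyadic rationals of `[0, 1]` and strictly decreasing for `≪`. Then
`f U = sup {q | c q ∈ U}` is modular on upper sets (for an upper set, `{q | c q ∈ U}` is an initial
segment), commutes with all unions, and is co-continuous because `c q ≪ c q'` for `q < q'`, so
that the Scott open set `{z | c q' ≪ z}` reaches down to `c q`. The sum `∑ 2⁻¹ ^ (n + 1) * f_n`
over an enumeration of the countably many pairs is the valuation: directed suprema and (the sum
being bounded) filtered infima commute with it, and if `x ∈ V \ U` then some pair `a ≪ b ≪ x`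
lies in `V`, and the term of its chain is `0` on `U` but positive on `V`.
-/

open scoped ENNReal

namespace ENNReal

theorem tsum_inv_two_pow_succ : ∑' n : ℕ, (2⁻¹ : ℝ≥0∞) ^ (n + 1) = 1 := by
  simp [ENNReal.tsum_geometric_add_one, ENNReal.one_sub_inv_two, ENNReal.inv_mul_cancel]

variable {ι β : Type*} {r : ι → ι → Prop} {s : Set ι} {f : β → ι → ℝ≥0∞}

theorem tsum_biSup_of_directedOn (hs : DirectedOn r s) (hf : ∀ a i j, r i j → f a i ≤ f a j) :
    ∑' a, ⨆ i ∈ s, f a i = ⨆ i ∈ s, ∑' a, f a i := by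
  have hdir (i j : s) : ∃ k : s, ∀ a, f a i ≤ f a k ∧ f a j ≤ f a k :=
    let ⟨k, hk, hik, hjk⟩ := hs i i.2 j j.2
    ⟨⟨k, hk⟩, fun a => ⟨hf a _ _ hik, hf a _ _ hjk⟩⟩
  simp only [iSup_subtype', ENNReal.tsum_eq_iSup_sum, ENNReal.finsetSum_iSup hdir]
  exact iSup_comm

/-- Pass to the complements `b a - f a i`, which form a directed family. -/
theorem tsum_biInf_of_directedOn {b : β → ℝ≥0∞} (hne : s.Nonempty) (hs : DirectedOn r s)
    (hf : ∀ a i j, r i j → f a j ≤ f a i) (hb : ∑' a, b a ≠ ∞) (hfb : ∀ a i, f a i ≤ b a) :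
    ∑' a, ⨅ i ∈ s, f a i = ⨅ i ∈ s, ∑' a, f a i := by
  have hcompl {g : β → ℝ≥0∞} (hg : ∀ a, g a ≤ b a) :
      ∑' a, g a = ∑' a, b a - ∑' a, (b a - g a) := by
    refine ENNReal.eq_sub_of_add_eq
      (ne_top_of_le_ne_top hb (ENNReal.tsum_le_tsum fun a => tsub_le_self)) ?_
    rw [← ENNReal.tsum_add]
    exact tsum_congr fun a => add_tsub_cancel_of_le (hg a)
  have : Nonempty s := hne.to_subtype
  obtain ⟨i₀, hi₀⟩ := hne
  calc ∑' a, ⨅ i ∈ s, f a i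
      = ∑' a, b a - ∑' a, (b a - ⨅ i ∈ s, f a i) :=
        hcompl fun a => (biInf_le _ hi₀).trans (hfb a i₀)
    _ = ∑' a, b a - ∑' a, ⨆ i ∈ s, (b a - f a i) := by simp only [ENNReal.sub_iInf]
    _ = ∑' a, b a - ⨆ i ∈ s, ∑' a, (b a - f a i) := by
        rw [tsum_biSup_of_directedOn (f := fun a i => b a - f a i) hs
          fun a i j h => tsub_le_tsub_left (hf a i j h) _]
    _ = ⨅ i ∈ s, (∑' a, b a - ∑' a, (b a - f a i)) := by
        rw [iSup_subtype', iInf_subtype', ENNReal.sub_iSup hb]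
    _ = ⨅ i ∈ s, ∑' a, f a i := iInf_congr fun i => iInf_congr fun _ => (hcompl (hfb · i)).symm

end ENNReal

noncomputable def dyadic (k i : ℕ) : ℝ≥0∞ := i / 2 ^ k

lemma dyadic_ne_top (k i : ℕ) : dyadic k i ≠ ∞ := by simp [dyadic, ENNReal.div_eq_top]

lemma dyadic_le_dyadic_iff {k i l j : ℕ} : dyadic k i ≤ dyadic l j ↔ i * 2 ^ l ≤ j * 2 ^ k := by
  rw [← ENNReal.toReal_le_toReal (dyadic_ne_top k i) (dyadic_ne_top l j)]
  simp only [dyadic, ENNReal.toReal_div, ENNReal.toReal_natCast, ENNReal.toReal_pow,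
    ENNReal.toReal_ofNat]
  rw [div_le_div_iff₀ (by positivity) (by positivity)]
  exact_mod_cast Iff.rfl

lemma dyadic_lt_dyadic_iff {k i l j : ℕ} : dyadic k i < dyadic l j ↔ i * 2 ^ l < j * 2 ^ k := by
  simp only [← not_le, dyadic_le_dyadic_iff]

@[simp] lemma dyadic_zero_right (k : ℕ) : dyadic k 0 = 0 := by simp [dyadic]

@[simp] lemma dyadic_two_pow (k : ℕ) : dyadic k (2 ^ k) = 1 := by
  simp [dyadic, ENNReal.div_self]

@[simp] lemma dyadic_zero_one : dyadic 0 1 = 1 := dyadic_two_pow 0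

lemma dyadic_le_one {k i : ℕ} (h : i ≤ 2 ^ k) : dyadic k i ≤ 1 :=
  (dyadic_le_dyadic_iff.mpr (Nat.mul_le_mul_right _ h)).trans_eq (dyadic_two_pow k)

lemma dyadic_succ (k i : ℕ) : dyadic k (i + 1) = dyadic k i + 2⁻¹ ^ k := by
  simp [dyadic, ENNReal.add_div, ENNReal.inv_pow, one_div]

theorem exists_dyadic_btwn {s t : ℝ≥0∞} (hst : s < t) (ht : t ≤ 1) :
    ∃ k i, i ≤ 2 ^ k ∧ s < dyadic k i ∧ dyadic k i < t := by
  classical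
  obtain ⟨k, hk⟩ := ENNReal.exists_inv_two_pow_lt (tsub_pos_of_lt hst).ne'
  have hs : s < dyadic k (2 ^ k) := by simpa using hst.trans_le ht
  have hex : ∃ i, s < dyadic k i := ⟨2 ^ k, hs⟩
  refine ⟨k, Nat.find hex, Nat.find_min' hex hs, Nat.find_spec hex, ?_⟩
  obtain ⟨i, hi⟩ : ∃ i, Nat.find hex = i + 1 :=
    Nat.exists_eq_add_one.mpr (Nat.pos_of_ne_zero fun h => by simpa [h] using Nat.find_spec hex)
  have his : dyadic k i ≤ s := not_lt.mp (Nat.find_min hex (by omega))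
  calc dyadic k (Nat.find hex) = dyadic k i + 2⁻¹ ^ k := by rw [hi, dyadic_succ]
    _ < s + (t - s) := ENNReal.add_lt_add_of_le_of_lt (dyadic_ne_top k i) his hk
    _ = t := add_tsub_cancel_of_le hst.le

/-- `c k i` is the point of the chain at `dyadic k i`; only the indices with `i ≤ 2 ^ k`, i.e. the
dyadics in `[0, 1]`, are constrained. -/
structure IsDyadicChain {α : Type*} (r : α → α → Prop) (c : ℕ → ℕ → α) : Prop where
  eq_of_dyadic_eq {k i l j : ℕ} : dyadic k i = dyadic l j → c k i = c l j
  rel_of_dyadic_lt {k i l j : ℕ} : j ≤ 2 ^ l → dyadic k i < dyadic l j → r (c k i) (c l j)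

section DyadicChain

variable {α : Type*}

def dyadicChain (m : α → α → α) (x y : α) : ℕ → ℕ → α
  | 0, i => if i = 0 then x else y
  | k + 1, i =>
    if Even i then dyadicChain m x y k (i / 2)
    else m (dyadicChain m x y k (i / 2)) (dyadicChain m x y k (i / 2 + 1))

variable {m : α → α → α} {x y : α}

lemma dyadicChain_succ_two_mul (k j : ℕ) :
    dyadicChain m x y (k + 1) (2 * j) = dyadicChain m x y k j := by
  simp [dyadicChain]

lemma dyadicChain_succ_two_mul_add_one (k j : ℕ) :
    dyadicChain m x y (k + 1) (2 * j + 1) =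
      m (dyadicChain m x y k j) (dyadicChain m x y k (j + 1)) := by
  simp [dyadicChain, Nat.add_div_of_dvd_right]

lemma dyadicChain_add_mul_two_pow (k n i : ℕ) :
    dyadicChain m x y (k + n) (i * 2 ^ n) = dyadicChain m x y k i := by
  induction n with
  | zero => simp
  | succ n ih =>
    rw [← add_assoc, show i * 2 ^ (n + 1) = 2 * (i * 2 ^ n) by ring, dyadicChain_succ_two_mul, ih]

variable {r : α → α → Prop}

lemma dyadicChain_rel_succ (hm : ∀ a b, r a b → r a (m a b) ∧ r (m a b) b) (hxy : r x y)
    {k i : ℕ} (hi : i < 2 ^ k) : r (dyadicChain m x y k i) (dyadicChain m x y k (i + 1)) := by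
  induction k generalizing i with
  | zero => simp_all [dyadicChain]
  | succ k ih =>
    obtain ⟨j, rfl | rfl⟩ := Nat.even_or_odd' i
    · rw [dyadicChain_succ_two_mul, dyadicChain_succ_two_mul_add_one]
      exact (hm _ _ (ih (by omega))).1
    · rw [dyadicChain_succ_two_mul_add_one, show 2 * j + 1 + 1 = 2 * (j + 1) by ring,
        dyadicChain_succ_two_mul]
      exact (hm _ _ (ih (by omega))).2

lemma dyadicChain_rel_of_lt [IsTrans α r] (hm : ∀ a b, r a b → r a (m a b) ∧ r (m a b) b)
    (hxy : r x y) {k i j : ℕ} (hij : i < j) (hj : j ≤ 2 ^ k) :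
    r (dyadicChain m x y k i) (dyadicChain m x y k j) := by
  induction j, hij using Nat.le_induction with
  | base => exact dyadicChain_rel_succ hm hxy (by omega)
  | succ j hij ih => exact _root_.trans (ih (by omega)) (dyadicChain_rel_succ hm hxy (by omega))

lemma isDyadicChain_dyadicChain [IsTrans α r] (hm : ∀ a b, r a b → r a (m a b) ∧ r (m a b) b)
    (hxy : r x y) : IsDyadicChain r (dyadicChain m x y) where
  eq_of_dyadic_eq {k i l j} h := by
    rw [← dyadicChain_add_mul_two_pow k l i, ← dyadicChain_add_mul_two_pow l k j, add_comm l,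
      le_antisymm (dyadic_le_dyadic_iff.mp h.le) (dyadic_le_dyadic_iff.mp h.ge)]
  rel_of_dyadic_lt {k i l j} hj h := by
    rw [← dyadicChain_add_mul_two_pow k l i, ← dyadicChain_add_mul_two_pow l k j, add_comm l]
    refine dyadicChain_rel_of_lt hm hxy (dyadic_lt_dyadic_iff.mp h) ?_
    rw [pow_add, mul_comm (2 ^ k)]
    exact Nat.mul_le_mul_right _ hj

theorem IsDyadicChain.exists [IsTrans α r] (hr : ∀ a b, r a b → ∃ c, r a c ∧ r c b)
    (hxy : r x y) : ∃ c, IsDyadicChain r c ∧ c 0 0 = x ∧ c 0 1 = y := by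
  choose! m hm using hr
  exact ⟨dyadicChain m x y, isDyadicChain_dyadicChain hm hxy, rfl, rfl⟩

end DyadicChain

section WayBelow

variable {α : Type*} [Preorder α] {K U : Set α} {x y z : α}

theorem wayBelow.le (h : wayBelow x y) : x ≤ y := by
  obtain ⟨s, rfl, hs⟩ := h {y} (Set.singleton_nonempty y) (directedOn_singleton y) y
    isLUB_singleton le_rfl
  exact hs

theorem LE.le.trans_wayBelow (hxy : x ≤ y) (h : wayBelow y z) : wayBelow x z :=
  fun S hne hdir b hb hzb => (h S hne hdir b hb hzb).imp fun _ ⟨hs, hys⟩ => ⟨hs, hxy.trans hys⟩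

theorem wayBelow.trans_le (h : wayBelow x y) (hyz : y ≤ z) : wayBelow x z :=
  fun S hne hdir b hb hzb => h S hne hdir b hb (hyz.trans hzb)

theorem wayBelow.trans (hxy : wayBelow x y) (hyz : wayBelow y z) : wayBelow x z :=
  hxy.le.trans_wayBelow hyz

theorem ScottOpen.isUpperSet (hU : ScottOpen U) : IsUpperSet U :=
  fun a b hab ha => hU.1 a ha b hab

theorem ScottOpen.exists_mem_wayBelow (hU : ScottOpen U) (hB : IsDomBasis K) (hx : x ∈ U) :
    ∃ k ∈ K, wayBelow k x ∧ k ∈ U := by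
  obtain ⟨hne, hdir, hlub⟩ := hB x
  obtain ⟨k, ⟨hkK, hkx⟩, hkU⟩ := hU.2 _ hne hdir x hlub hx
  exact ⟨k, hkK, hkx, hkU⟩

/-- `y` is the directed supremum of the basis elements way below some basis element way below `y`;
apply `x ≪ y` to that set. -/
theorem IsDomBasis.exists_wayBelow_wayBelow (hB : IsDomBasis K) (h : wayBelow x y) :
    ∃ z ∈ K, wayBelow x z ∧ wayBelow z y := by
  set D := {k ∈ K | ∃ k' ∈ K, wayBelow k k' ∧ wayBelow k' y}
  have hD_ne : D.Nonempty := by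
    obtain ⟨k', hk'K, hk'y⟩ := (hB y).1
    obtain ⟨k, hkK, hkk'⟩ := (hB k').1
    exact ⟨k, hkK, k', hk'K, hkk', hk'y⟩
  have hD_dir : DirectedOn (· ≤ ·) D := by
    rintro a ⟨-, a', ha'K, haa', ha'y⟩ b ⟨-, b', hb'K, hbb', hb'y⟩
    obtain ⟨c, ⟨hcK, hcy⟩, ha'c, hb'c⟩ := (hB y).2.1 a' ⟨ha'K, ha'y⟩ b' ⟨hb'K, hb'y⟩
    obtain ⟨hne, hdir, hlub⟩ := hB c
    obtain ⟨s₁, hs₁, has₁⟩ := haa'.trans_le ha'c _ hne hdir c hlub le_rfl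
    obtain ⟨s₂, hs₂, hbs₂⟩ := hbb'.trans_le hb'c _ hne hdir c hlub le_rfl
    obtain ⟨s, ⟨hsK, hsc⟩, hs₁s, hs₂s⟩ := hdir s₁ hs₁ s₂ hs₂
    exact ⟨s, ⟨hsK, c, hcK, hsc, hcy⟩, has₁.trans hs₁s, hbs₂.trans hs₂s⟩
  have hD_lub : IsLUB D y := by
    refine ⟨fun k ⟨_, k', _, hkk', hk'y⟩ => hkk'.le.trans hk'y.le, fun u hu => ?_⟩
    refine (hB y).2.2.2 fun k' ⟨hk'K, hk'y⟩ => (hB k').2.2.2 ?_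
    exact fun k ⟨hkK, hkk'⟩ => hu ⟨hkK, k', hk'K, hkk', hk'y⟩
  obtain ⟨s, ⟨-, z, hzK, hsz, hzy⟩, hxs⟩ := h D hD_ne hD_dir y hD_lub le_rfl
  exact ⟨z, hzK, hxs.trans_wayBelow hsz, hzy⟩

theorem IsDomBasis.scottOpen_setOf_wayBelow (hB : IsDomBasis K) (x : α) :
    ScottOpen {y | wayBelow x y} := by
  refine ⟨fun y hxy z hyz => hxy.trans_le hyz, fun S hne hdir b hb hxb => ?_⟩
  obtain ⟨z, -, hxz, hzb⟩ := hB.exists_wayBelow_wayBelow hxb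
  obtain ⟨s, hs, hzs⟩ := hzb S hne hdir b hb le_rfl
  exact ⟨s, hs, hxz.trans_le hzs⟩

theorem scottInt_subset (B : Set α) : scottInt B ⊆ B :=
  Set.sUnion_subset fun _ hU => hU.2

theorem ScottOpen.subset_scottInt {B : Set α} (hU : ScottOpen U) (h : U ⊆ B) : U ⊆ scottInt B :=
  Set.subset_sUnion_of_mem ⟨hU, h⟩

end WayBelow

section ChainVal

variable {α : Type*} {c : ℕ → ℕ → α} {U V : Set α} {k i l j : ℕ}

noncomputable def chainVal (c : ℕ → ℕ → α) (U : Set α) : ℝ≥0∞ :=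
  ⨆ (k) (i) (_ : i ≤ 2 ^ k ∧ c k i ∈ U), dyadic k i

lemma le_chainVal (hi : i ≤ 2 ^ k) (h : c k i ∈ U) : dyadic k i ≤ chainVal c U :=
  le_iSup_of_le k <| le_iSup₂_of_le i ⟨hi, h⟩ le_rfl

lemma chainVal_le_one : chainVal c U ≤ 1 :=
  iSup_le fun _ => iSup₂_le fun _ h => dyadic_le_one h.1

lemma chainVal_mono (h : U ⊆ V) : chainVal c U ≤ chainVal c V :=
  iSup_le fun _ => iSup₂_le fun _ hi => le_chainVal hi.1 (h hi.2)

@[simp] lemma chainVal_empty : chainVal c ∅ = 0 := by simp [chainVal]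

lemma chainVal_eq_one (h : c 0 1 ∈ U) : chainVal c U = 1 :=
  chainVal_le_one.antisymm (by simpa using le_chainVal (k := 0) (i := 1) le_rfl h)

lemma chainVal_sUnion (𝒰 : Set (Set α)) : chainVal c (⋃₀ 𝒰) = ⨆ U ∈ 𝒰, chainVal c U :=
  le_antisymm
    (iSup_le fun _ => iSup₂_le fun _ ⟨hi, U, hU, h⟩ => le_iSup₂_of_le U hU (le_chainVal hi h))
    (iSup₂_le fun _ hU => chainVal_mono (Set.subset_sUnion_of_mem hU))

lemma chainVal_union : chainVal c (U ∪ V) = chainVal c U ⊔ chainVal c V := by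
  rw [← Set.sUnion_pair, chainVal_sUnion, iSup_pair]

variable [Preorder α]

theorem IsDyadicChain.le_of_dyadic_le (hc : IsDyadicChain (flip wayBelow) c) (hj : j ≤ 2 ^ l)
    (h : dyadic k i ≤ dyadic l j) : c l j ≤ c k i :=
  h.eq_or_lt.elim (fun h => (hc.eq_of_dyadic_eq h).ge)
    (fun h => wayBelow.le (hc.rel_of_dyadic_lt hj h))

theorem IsDyadicChain.mem_of_dyadic_lt_chainVal (hc : IsDyadicChain (flip wayBelow) c)
    (hU : IsUpperSet U) (h : dyadic l j < chainVal c U) : c l j ∈ U := by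
  obtain ⟨k, i, ⟨hi, hkiU⟩, hlt⟩ : ∃ k i, (i ≤ 2 ^ k ∧ c k i ∈ U) ∧ dyadic l j < dyadic k i := by
    simpa [chainVal, lt_iSup_iff] using h
  exact hU (hc.le_of_dyadic_le hi hlt.le) hkiU

theorem IsDyadicChain.chainVal_eq_zero (hc : IsDyadicChain (flip wayBelow) c)
    (hU : IsUpperSet U) (h : c 0 0 ∉ U) : chainVal c U = 0 :=
  nonpos_iff_eq_zero.mp <| not_lt.mp fun hpos =>
    h (hc.mem_of_dyadic_lt_chainVal hU (l := 0) (j := 0) (by simpa using hpos))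

theorem IsDyadicChain.chainVal_inter (hc : IsDyadicChain (flip wayBelow) c)
    (hU : IsUpperSet U) (hV : IsUpperSet V) :
    chainVal c (U ∩ V) = chainVal c U ⊓ chainVal c V := by
  refine le_antisymm (le_inf (chainVal_mono Set.inter_subset_left)
    (chainVal_mono Set.inter_subset_right)) ?_
  simp only [chainVal, iSup_inf_eq, inf_iSup_eq]
  refine iSup_le fun l => iSup₂_le fun j ⟨hj, hljV⟩ =>
    iSup_le fun k => iSup₂_le fun i ⟨hi, hkiU⟩ => ?_
  rcases le_total (dyadic k i) (dyadic l j) with h | h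
  · exact inf_le_left.trans (le_chainVal hi ⟨hkiU, hV (hc.le_of_dyadic_le hj h) hljV⟩)
  · exact inf_le_right.trans (le_chainVal hj ⟨hU (hc.le_of_dyadic_le hi h) hkiU, hljV⟩)

/-- For dyadics `s < q < q' < ⨅ U ∈ 𝒰, chainVal c U`, the point `c q'` lies in every `U ∈ 𝒰`, so
`c q` lies in the Scott open set `{z | c q' ≪ z} ⊆ ⋂₀ 𝒰`. -/
theorem IsDyadicChain.iInf_chainVal_le {K : Set α} (hc : IsDyadicChain (flip wayBelow) c)
    (hB : IsDomBasis K) {𝒰 : Set (Set α)} (hne : 𝒰.Nonempty) (h𝒰 : ∀ U ∈ 𝒰, IsUpperSet U) :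
    ⨅ U ∈ 𝒰, chainVal c U ≤ chainVal c (scottInt (⋂₀ 𝒰)) := by
  refine le_of_forall_lt fun s hs => ?_
  obtain ⟨U₀, hU₀⟩ := hne
  obtain ⟨l, j, hj, hsq', hq't⟩ := exists_dyadic_btwn hs ((biInf_le _ hU₀).trans chainVal_le_one)
  obtain ⟨k, i, hi, hsq, hqq'⟩ := exists_dyadic_btwn hsq' (dyadic_le_one hj)
  have hmem : c l j ∈ ⋂₀ 𝒰 := fun U hU =>
    hc.mem_of_dyadic_lt_chainVal (h𝒰 U hU) (hq't.trans_le (biInf_le _ hU))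
  have hint : c k i ∈ scottInt (⋂₀ 𝒰) :=
    (hB.scottOpen_setOf_wayBelow (c l j)).subset_scottInt
      (fun _ hz U hU => h𝒰 U hU hz.le (hmem U hU)) (hc.rel_of_dyadic_lt hj hqq')
  exact hsq.trans_le (le_chainVal hi hint)

end ChainVal

section ChainSeqVal

variable {α : Type*} {c : ℕ → ℕ → ℕ → α} {U V : Set α} {𝒰 : Set (Set α)}

noncomputable def chainSeqVal (c : ℕ → ℕ → ℕ → α) (U : Set α) : ℝ≥0∞ :=
  ∑' n, 2⁻¹ ^ (n + 1) * chainVal (c n) U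

lemma chainSeqVal_empty : chainSeqVal c ∅ = 0 := by simp [chainSeqVal]

lemma chainSeqVal_univ : chainSeqVal c Set.univ = 1 := by
  simp [chainSeqVal, chainVal_eq_one, ENNReal.tsum_inv_two_pow_succ]

lemma chainSeqVal_mono (h : U ⊆ V) : chainSeqVal c U ≤ chainSeqVal c V :=
  ENNReal.tsum_le_tsum fun _ => mul_le_mul_right (chainVal_mono h) _

lemma chainSeqVal_ne_top (U : Set α) : chainSeqVal c U ≠ ∞ :=
  ne_top_of_le_ne_top ENNReal.one_ne_top
    ((chainSeqVal_mono (Set.subset_univ U)).trans_eq chainSeqVal_univ)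

lemma chainSeqVal_lt_chainSeqVal {n : ℕ} (h : U ⊆ V) (hn : chainVal (c n) U < chainVal (c n) V) :
    chainSeqVal c U < chainSeqVal c V :=
  ENNReal.tsum_lt_tsum (chainSeqVal_ne_top U) (fun _ => mul_le_mul_right (chainVal_mono h) _)
    (ENNReal.mul_lt_mul_right (by simp) (by simp) hn)

lemma chainSeqVal_sUnion (h𝒰 : DirectedOn (· ⊆ ·) 𝒰) :
    chainSeqVal c (⋃₀ 𝒰) = ⨆ U ∈ 𝒰, chainSeqVal c U := by
  simp only [chainSeqVal, chainVal_sUnion, ENNReal.mul_iSup]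
  exact ENNReal.tsum_biSup_of_directedOn h𝒰 fun _ _ _ h => mul_le_mul_right (chainVal_mono h) _

variable [Preorder α] {K : Set α}

lemma chainSeqVal_add_chainSeqVal (hc : ∀ n, IsDyadicChain (flip wayBelow) (c n))
    (hU : IsUpperSet U) (hV : IsUpperSet V) :
    chainSeqVal c U + chainSeqVal c V = chainSeqVal c (U ∩ V) + chainSeqVal c (U ∪ V) := by
  simp only [chainSeqVal, ← ENNReal.tsum_add, ← mul_add, (hc _).chainVal_inter hU hV,
    chainVal_union, min_add_max]

lemma chainSeqVal_scottInt_sInter (hc : ∀ n, IsDyadicChain (flip wayBelow) (c n))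
    (hB : IsDomBasis K) (hne : 𝒰.Nonempty) (h𝒰 : ∀ U ∈ 𝒰, IsUpperSet U)
    (hdir : DirectedOn (· ⊇ ·) 𝒰) :
    chainSeqVal c (scottInt (⋂₀ 𝒰)) = ⨅ U ∈ 𝒰, chainSeqVal c U := by
  refine le_antisymm (le_iInf₂ fun U hU =>
    chainSeqVal_mono ((scottInt_subset _).trans (Set.sInter_subset_of_mem hU))) ?_
  simp only [chainSeqVal]
  rw [← ENNReal.tsum_biInf_of_directedOn (f := fun n U => 2⁻¹ ^ (n + 1) * chainVal (c n) U)
    (b := fun n => 2⁻¹ ^ (n + 1)) hne hdir (fun _ _ _ h => mul_le_mul_right (chainVal_mono h) _)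
    ?_ fun _ _ => mul_le_of_le_one_right' chainVal_le_one]
  · refine ENNReal.tsum_le_tsum fun n => ?_
    simp only [← ENNReal.mul_iInf_of_ne (by simp : (2⁻¹ : ℝ≥0∞) ^ (n + 1) ≠ 0) (by simp)]
    exact mul_le_mul_right ((hc n).iInf_chainVal_le hB hne h𝒰) _
  · simp [ENNReal.tsum_inv_two_pow_succ]

end ChainSeqVal

section Separating

variable {α : Type*} [Preorder α] {K : Set α}

theorem IsDomBasis.exists_isDyadicChain (hB : IsDomBasis K) {a b : α} (h : wayBelow a b) :
    ∃ c, IsDyadicChain (flip wayBelow) c ∧ c 0 0 = b ∧ c 0 1 = a :=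
  have : IsTrans α (flip wayBelow) := ⟨fun _ _ _ h₁ h₂ => wayBelow.trans h₂ h₁⟩
  IsDyadicChain.exists (fun _ _ h => (hB.exists_wayBelow_wayBelow h).imp fun _ ⟨_, h₁, h₂⟩ =>
    ⟨h₂, h₁⟩) h

/-- Take one chain from `b` down to `a` for each pair `a ≪ b` of basis elements: if `x ∈ V \ U`,
pick such a pair in `V` with `b ≪ x`; its chain meets `V` at `1` and stays below `x`, so outside
`U`. -/
theorem IsDomBasis.exists_seq_isDyadicChain [Nonempty α] (hB : IsDomBasis K) (hK : K.Countable) :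
    ∃ c : ℕ → ℕ → ℕ → α, (∀ n, IsDyadicChain (flip wayBelow) (c n)) ∧
      ∀ U V, ScottOpen U → ScottOpen V → U ⊂ V → ∃ n, chainVal (c n) U < chainVal (c n) V := by
  set P := {p : α × α | p.1 ∈ K ∧ p.2 ∈ K ∧ wayBelow p.1 p.2}
  have hP_ne : P.Nonempty := by
    obtain ⟨b, hbK, -⟩ := (hB (Classical.arbitrary α)).1
    obtain ⟨a, haK, hab⟩ := (hB b).1
    exact ⟨(a, b), haK, hbK, hab⟩
  have hP : P.Countable := (hK.prod hK).mono fun _ hp => Set.mk_mem_prod hp.1 hp.2.1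
  obtain ⟨e, he⟩ := hP.exists_eq_range hP_ne
  have hwb (n : ℕ) : wayBelow (e n).1 (e n).2 := (he ▸ Set.mem_range_self n : e n ∈ P).2.2
  choose c hc htop hbot using fun n => hB.exists_isDyadicChain (hwb n)
  refine ⟨c, hc, fun U V hU hV hUV => ?_⟩
  obtain ⟨x, hxV, hxU⟩ := Set.exists_of_ssubset hUV
  obtain ⟨b, hbK, hbx, hbV⟩ := hV.exists_mem_wayBelow hB hxV
  obtain ⟨a, haK, hab, haV⟩ := hV.exists_mem_wayBelow hB hbV
  obtain ⟨n, hn⟩ : (a, b) ∈ Set.range e := he ▸ (⟨haK, hbK, hab⟩ : (a, b) ∈ P)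
  have hU0 : chainVal (c n) U = 0 := (hc n).chainVal_eq_zero hU.isUpperSet fun h =>
    hxU (hU.isUpperSet (by rw [htop, hn]; exact hbx.le) h)
  exact ⟨n, by rw [hU0, chainVal_eq_one (by rwa [hbot, hn])]; exact zero_lt_one⟩

end Separating

/-- every continuous dcpo with a countable basis carries a
CC-valuation on its Scott open sets: a `[0,∞]`-valued normalized valuation which
is continuous, strongly non-degenerate, and co-continuous. -/
theorem stmt10 {α : Type*} [PartialOrder α]
    (hd : IsDcpo α) (K : Set α) (hKc : K.Countable) (hB : IsDomBasis K) :
    ∃ μ : Set α → ENNReal,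
      μ ∅ = 0 ∧ μ Set.univ = 1 ∧
      (∀ U V : Set α, ScottOpen U → ScottOpen V → U ⊆ V → μ U ≤ μ V) ∧
      (∀ U V : Set α, ScottOpen U → ScottOpen V → μ U + μ V = μ (U ∩ V) + μ (U ∪ V)) ∧
      (∀ 𝒰 : Set (Set α), 𝒰.Nonempty → (∀ U ∈ 𝒰, ScottOpen U) → DirectedOn (· ⊆ ·) 𝒰 →
        μ (⋃₀ 𝒰) = ⨆ U ∈ 𝒰, μ U) ∧
      (∀ U V : Set α, ScottOpen U → ScottOpen V → U ⊂ V → μ U < μ V) ∧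
      (∀ 𝒰 : Set (Set α), 𝒰.Nonempty → (∀ U ∈ 𝒰, ScottOpen U) → DirectedOn (· ⊇ ·) 𝒰 →
        μ (scottInt (⋂₀ 𝒰)) = ⨅ U ∈ 𝒰, μ U) := by
  obtain ⟨x₀, -⟩ := hd ∅ (by simp [DirectedOn])
  have : Nonempty α := ⟨x₀⟩
  obtain ⟨c, hc, hsep⟩ := hB.exists_seq_isDyadicChain hKc
  refine ⟨chainSeqVal c, chainSeqVal_empty, chainSeqVal_univ, fun U V _ _ => chainSeqVal_mono,
    fun U V hU hV => chainSeqVal_add_chainSeqVal hc hU.isUpperSet hV.isUpperSet,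
    fun 𝒰 _ _ => chainSeqVal_sUnion, fun U V hU hV hUV => ?_,
    fun 𝒰 hne h𝒰 => chainSeqVal_scottInt_sInter hc hB hne fun U hU => (h𝒰 U hU).isUpperSet⟩
  obtain ⟨n, hn⟩ := hsep U V hU hV hUV
  exact chainSeqVal_lt_chainSeqVal hUV.subset hn
end
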